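/- arXiv:math/0012238 — 2 statements merged into one kernel-verified Lean document; each statement's English description precedes it below -/
import Mathlib

section
/- Let v, w ∈ ℍ with v ≠ 0. Then there exists N ∈ ℍ with N² = −1 and w = N·v if and only if ‖w‖ = ‖v‖ and ⟨v,w⟩ = 0. Moreover, in this case N = w·v⁻¹ is the unique such quaternion, N is purely imaginary of norm one, and R := v⁻¹·w is the unique quaternion satisfying R² = −1 and w = v·R. (This is the pointwise content of the statement that a map f into ℍ = ℝ⁴ with nonvanishing differential satisfies *df = N df for some N with N² = −1 exactly when f is conformal, and that N is then uniquely determined.) -/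
/-! A quaternion squares to `-1` exactly when it is purely imaginary of norm one. If `w = N v`
with such an `N`, then `‖w‖ = ‖v‖` and `⟨v, w⟩ = Re(N) ‖v‖² = 0`. Conversely, when `‖w‖ = ‖v‖`
and `⟨v, w⟩ = 0`, both `w v⁻¹` and `v⁻¹ w` have norm one and real part `⟨v, w⟩ / ‖v‖² = 0`;
uniqueness is cancellation of `v`. -/

section NormedDivisionRing

variable {K : Type*} [NormedDivisionRing K] {v w : K}

theorem norm_mul_inv_eq_one_of_norm_eq (hv : v ≠ 0) (hnorm : ‖w‖ = ‖v‖) : ‖w * v⁻¹‖ = 1 := by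
  rw [norm_mul, norm_inv, hnorm, mul_inv_cancel₀ (norm_ne_zero_iff.2 hv)]

theorem norm_inv_mul_eq_one_of_norm_eq (hv : v ≠ 0) (hnorm : ‖w‖ = ‖v‖) : ‖v⁻¹ * w‖ = 1 := by
  rw [norm_mul, norm_inv, hnorm, inv_mul_cancel₀ (norm_ne_zero_iff.2 hv)]

end NormedDivisionRing

namespace Quaternion

section CommRing

variable {R : Type*} [CommRing R]

theorem re_mul_comm (a b : ℍ[R]) : (a * b).re = (b * a).re := by
  simp only [re_mul]
  ring

theorem re_star_mul_mul (a b : ℍ[R]) : (star b * (a * b)).re = a.re * normSq b := by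
  rw [re_mul_comm, mul_assoc, self_mul_star, mul_coe_eq_smul, re_smul, smul_eq_mul, mul_comm]

end CommRing

section LinearOrderedCommRing

variable {R : Type*} [CommRing R] [LinearOrder R] [IsStrictOrderedRing R]

theorem sq_eq_neg_one_iff {a : ℍ[R]} : a ^ 2 = -1 ↔ a.re = 0 ∧ normSq a = 1 := by
  constructor
  · intro h
    have hnormSq : normSq a = 1 := by
      have hsq : normSq a ^ 2 = 1 := by rw [← map_pow, h, normSq_neg, map_one]
      exact (pow_eq_one_iff_of_nonneg normSq_nonneg two_ne_zero).1 hsq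
    exact ⟨sq_eq_neg_normSq.1 (by rw [h, hnormSq, coe_one]), hnormSq⟩
  · rintro ⟨hre, hnormSq⟩
    rw [sq_eq_neg_normSq.2 hre, hnormSq, coe_one]

end LinearOrderedCommRing

section LinearOrderedField

variable {R : Type*} [Field R] [LinearOrder R] [IsStrictOrderedRing R]

theorem re_mul_inv (a b : ℍ[R]) : (a * b⁻¹).re = (star b * a).re / normSq b := by
  rw [inv_def, mul_smul_comm, re_smul, smul_eq_mul, re_mul_comm, inv_mul_eq_div]

theorem re_inv_mul (a b : ℍ[R]) : (b⁻¹ * a).re = (star b * a).re / normSq b := by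
  rw [inv_def, smul_mul_assoc, re_smul, smul_eq_mul, inv_mul_eq_div]

end LinearOrderedField

theorem sq_eq_neg_one_iff_re_eq_zero_and_norm_eq_one {a : ℍ} :
    a ^ 2 = -1 ↔ a.re = 0 ∧ ‖a‖ = 1 := by
  rw [sq_eq_neg_one_iff, normSq_eq_norm_mul_self, ← sq,
    pow_eq_one_iff_of_nonneg (norm_nonneg a) two_ne_zero]

theorem norm_mul_eq_and_re_star_mul_mul_eq_zero {N : ℍ} (hN : N ^ 2 = -1) (v : ℍ) :
    ‖N * v‖ = ‖v‖ ∧ (star v * (N * v)).re = 0 := by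
  obtain ⟨hN_re, hN_norm⟩ := sq_eq_neg_one_iff_re_eq_zero_and_norm_eq_one.1 hN
  exact ⟨by rw [norm_mul, hN_norm, one_mul], by rw [re_star_mul_mul, hN_re, zero_mul]⟩

theorem sq_mul_inv_eq_neg_one {v w : ℍ} (hv : v ≠ 0) (hnorm : ‖w‖ = ‖v‖)
    (hperp : (star v * w).re = 0) : (w * v⁻¹) ^ 2 = -1 :=
  sq_eq_neg_one_iff_re_eq_zero_and_norm_eq_one.2
    ⟨by rw [re_mul_inv, hperp, zero_div], norm_mul_inv_eq_one_of_norm_eq hv hnorm⟩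

theorem sq_inv_mul_eq_neg_one {v w : ℍ} (hv : v ≠ 0) (hnorm : ‖w‖ = ‖v‖)
    (hperp : (star v * w).re = 0) : (v⁻¹ * w) ^ 2 = -1 :=
  sq_eq_neg_one_iff_re_eq_zero_and_norm_eq_one.2
    ⟨by rw [re_inv_mul, hperp, zero_div], norm_inv_mul_eq_one_of_norm_eq hv hnorm⟩

end Quaternion

open Quaternion

/-- Pointwise conformality: for `v ≠ 0` there exists `N` with `N² = -1` and `w = N v`
iff `‖w‖ = ‖v‖` and `⟨v, w⟩ = 0`; in that case `N = w v⁻¹` is the unique such quaternion,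
it is purely imaginary of norm one, and `R = v⁻¹ w` is the unique quaternion with
`R² = -1` and `w = v R`. -/
theorem quaternion_conformal_iff (v w : Quaternion ℝ) (hv : v ≠ 0) :
    ((∃ N : Quaternion ℝ, N ^ 2 = -1 ∧ w = N * v) ↔
      (‖w‖ = ‖v‖ ∧ (star v * w).re = 0)) ∧
    (‖w‖ = ‖v‖ → (star v * w).re = 0 →
      ((w * v⁻¹) ^ 2 = -1 ∧ w = (w * v⁻¹) * v ∧
        (w * v⁻¹).re = 0 ∧ ‖w * v⁻¹‖ = 1 ∧
        (∀ N : Quaternion ℝ, N ^ 2 = -1 → w = N * v → N = w * v⁻¹) ∧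
        (v⁻¹ * w) ^ 2 = -1 ∧ w = v * (v⁻¹ * w) ∧
        (∀ R : Quaternion ℝ, R ^ 2 = -1 → w = v * R → R = v⁻¹ * w))) := by
  refine ⟨⟨?_, fun ⟨hnorm, hperp⟩ => ⟨w * v⁻¹, sq_mul_inv_eq_neg_one hv hnorm hperp,
    (inv_mul_cancel_right₀ hv w).symm⟩⟩, fun hnorm hperp => ?_⟩
  · rintro ⟨N, hN, rfl⟩
    exact norm_mul_eq_and_re_star_mul_mul_eq_zero hN v
  refine ⟨sq_mul_inv_eq_neg_one hv hnorm hperp, (inv_mul_cancel_right₀ hv w).symm,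
    by rw [re_mul_inv, hperp, zero_div], norm_mul_inv_eq_one_of_norm_eq hv hnorm, ?_,
    sq_inv_mul_eq_neg_one hv hnorm hperp, (mul_inv_cancel_left₀ hv w).symm, ?_⟩
  · rintro N - rfl
    exact (mul_inv_cancel_right₀ hv N).symm
  · rintro R - rfl
    exact (inv_mul_cancel_left₀ hv R).symm
end

section
/- Let g, d, n be integers with g ≥ 1, 0 ≤ n, d ≤ n, and n ≤ d + 2g(n+1). Then there exists a natural number k with k ≤ n and 4g(k+1)(n − d − kg) ≥ (n + g − d)² − g². -/
/-!
Write `m = n - d`. The defect `4g(k+1)(m - kg) - ((m + g)² - g²)` factors as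
`(m - 2gk)(2g(k+1) - m)`, so it is nonnegative as soon as `2gk ≤ m ≤ 2g(k+1)`. Such a
`k ≤ n` is `⌊m / 2g⌋`, capped at `n`; the cap is harmless because `m ≤ 2g(n+1)`.
-/

theorem sq_add_sub_sq_le_of_two_mul_le_of_le_two_mul {R : Type*} [CommRing R] [LinearOrder R]
    [IsStrictOrderedRing R] {g m k : R} (h₁ : 2 * g * k ≤ m) (h₂ : m ≤ 2 * g * (k + 1)) :
    (m + g) ^ 2 - g ^ 2 ≤ 4 * g * (k + 1) * (m - k * g) := by
  have hdefect : 4 * g * (k + 1) * (m - k * g) - ((m + g) ^ 2 - g ^ 2) =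
      (m - 2 * g * k) * (2 * g * (k + 1) - m) := by ring
  have := mul_nonneg (sub_nonneg.2 h₁) (sub_nonneg.2 h₂)
  linarith

theorem Int.exists_nat_le_mul_le_le_mul_succ {c m : ℤ} {n : ℕ} (hc : 0 < c) (hm : 0 ≤ m)
    (hmn : m ≤ c * (n + 1)) : ∃ k : ℕ, k ≤ n ∧ c * k ≤ m ∧ m ≤ c * (k + 1) := by
  lift m / c to ℕ using Int.ediv_nonneg hm hc.le with q hq
  have hlo : c * q ≤ m := hq ▸ Int.mul_ediv_self_le hc.ne'
  have hhi : m < c * (q + 1) := by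
    rw [hq, mul_add, mul_one]
    exact Int.lt_mul_ediv_self_add hc
  rcases le_total q n with hqn | hnq
  · exact ⟨q, hqn, hlo, hhi.le⟩
  · refine ⟨n, le_rfl, le_trans ?_ hlo, hmn⟩
    exact mul_le_mul_of_nonneg_left (by exact_mod_cast hnq) hc.le

/-- Existence of a good vanishing order `k`: for integers `g ≥ 1`, `0 ≤ n`, `d ≤ n`,
`n ≤ d + 2g(n+1)`, there is `k ≤ n` with
`4g(k+1)(n - d - kg) ≥ (n + g - d)² - g²`. -/
theorem exists_good_vanishing_order (g d n : ℤ) (hg : 1 ≤ g) (hn : 0 ≤ n)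
    (hd : d ≤ n) (hbound : n ≤ d + 2 * g * (n + 1)) :
    ∃ k : ℕ, (k : ℤ) ≤ n ∧
      (n + g - d) ^ 2 - g ^ 2 ≤ 4 * g * ((k : ℤ) + 1) * (n - d - (k : ℤ) * g) := by
  lift n to ℕ using hn
  obtain ⟨k, hkn, hlo, hhi⟩ :=
    Int.exists_nat_le_mul_le_le_mul_succ (c := 2 * g) (m := n - d) (n := n)
      (by omega) (by omega) (by linarith)
  refine ⟨k, by exact_mod_cast hkn, ?_⟩
  have := sq_add_sub_sq_le_of_two_mul_le_of_le_two_mul hlo hhi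
  rwa [sub_add_eq_add_sub] at this
end
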